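/- Let p, q be strictly positive pmfs on a finite space X × Y with X a d-fold product. Suppose (p, q) is under exact s-SJS with index set I, |I| = s, and suppose some weight function w_J depending only on coordinates J ⊆ {1,…,d}, |J| = s, and y satisfies q(x, y) = w_J(x_J, y)·p(x, y) = w_I(x_I, y)·p(x, y) where w_I(x_I,y) = q(x_I,y)/p(x_I,y). If additionally w_J and w_I are equal as functions, then w_I depends only on coordinates in I ∩ J; and if the shift is exactly s-sparse (no index set of size < s induces the shift), then J = I. -/

import Mathlib

/-!
The weight `w_I = q(x_I, y) / p(x_I, y)` depends only on the coordinates in `I` by construction,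
and only on those in `J` because it coincides with `w_J`. On a product space this forces it to
depend only on `K = I ∩ J`: splice `x` on `I` with `x'` off `I`. A positive weight that depends
only on `K` makes `K` an SJS index set, so exactness gives `s ≤ |I ∩ J|`, whence `I = I ∩ J = J`.
-/

open scoped Classical

/-- Marginal pmf of `(X_I, Y)`: sum of `p (x', y)` over `x'` agreeing with `x` on `I`. -/
noncomputable def margI {d : ℕ} {Xi : Fin d → Type*} [∀ i, Fintype (Xi i)] {Y : Type*}
    (p : (∀ i, Xi i) → Y → ℝ) (I : Finset (Fin d)) (x : ∀ i, Xi i) (y : Y) : ℝ :=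
  ∑ x' : ∀ i, Xi i, if ∀ i ∈ I, x' i = x i then p x' y else 0

/-- `(p, q)` is under SJS with index set `I`:
the conditional of `X_{I^c}` given `(X_I, Y)` is identical under `p` and `q`. -/
def SJScond {d : ℕ} {Xi : Fin d → Type*} [∀ i, Fintype (Xi i)] {Y : Type*}
    (p q : (∀ i, Xi i) → Y → ℝ) (I : Finset (Fin d)) : Prop :=
  ∀ x y, q x y / margI q I x y = p x y / margI p I x y

theorem DependsOn.inter {ι β : Type*} {α : ι → Type*} {f : (Π i, α i) → β} {s t : Set ι}
    (hs : DependsOn f s) (ht : DependsOn f t) : DependsOn f (s ∩ t) := by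
  intro x y hxy
  have hx : ∀ i ∈ s, x i = s.piecewise x y i := fun i hi => by simp [hi]
  have hy : ∀ i ∈ t, s.piecewise x y i = y i := fun i hi => by
    by_cases his : i ∈ s
    · simpa [his] using hxy i ⟨his, hi⟩
    · simp [his]
  exact (hs hx).trans (ht hy)

section Marginal

variable {d : ℕ} {Xi : Fin d → Type*} [∀ i, Fintype (Xi i)] {Y : Type*}

lemma margI_pos {p : (∀ i, Xi i) → Y → ℝ} (hp : ∀ x y, 0 < p x y) (I : Finset (Fin d))
    (x : ∀ i, Xi i) (y : Y) : 0 < margI p I x y := by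
  have hx : p x y ≤ margI p I x y := by
    unfold margI
    simpa using Finset.single_le_sum
      (f := fun x' : ∀ i, Xi i => if ∀ i ∈ I, x' i = x i then p x' y else 0)
      (fun x' _ => by split_ifs <;> simp [(hp x' y).le]) (Finset.mem_univ x)
  exact (hp x y).trans_le hx

lemma dependsOn_margI (p : (∀ i, Xi i) → Y → ℝ) (I : Finset (Fin d)) (y : Y) :
    DependsOn (margI p I · y) I := by
  intro x x' hxx'
  refine Finset.sum_congr rfl fun z _ => if_congr ?_ rfl rfl
  exact forall₂_congr fun i hi => by rw [hxx' i hi]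

lemma margI_eq_mul_of_dependsOn {p q w : (∀ i, Xi i) → Y → ℝ} {K : Finset (Fin d)}
    (hqp : ∀ x y, q x y = w x y * p x y) (hw : ∀ y, DependsOn (w · y) K)
    (x : ∀ i, Xi i) (y : Y) : margI q K x y = w x y * margI p K x y := by
  rw [margI, margI, Finset.mul_sum]
  refine Finset.sum_congr rfl fun z _ => ?_
  split_ifs with hz
  · rw [hqp]
    exact congrArg (· * p z y) (hw y hz)
  · rw [mul_zero]

lemma sjsCond_of_eq_mul {p q w : (∀ i, Xi i) → Y → ℝ} {K : Finset (Fin d)}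
    (hqp : ∀ x y, q x y = w x y * p x y) (hw : ∀ y, DependsOn (w · y) K)
    (hw0 : ∀ x y, w x y ≠ 0) : SJScond p q K := by
  intro x y
  rw [margI_eq_mul_of_dependsOn hqp hw, hqp, mul_div_mul_left _ _ (hw0 x y)]

end Marginal

theorem stmt_15_general {d : ℕ} {Xi : Fin d → Type*} [∀ i, Fintype (Xi i)]
    {Y : Type*}
    (p q : (∀ i, Xi i) → Y → ℝ)
    (hp : ∀ x y, 0 < p x y) (hq : ∀ x y, 0 < q x y)
    (s : ℕ) (I J : Finset (Fin d)) (hIcard : I.card = s) (hJcard : J.card = s)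
    (hexact : ∀ I' : Finset (Fin d), I'.card < s → ¬ SJScond p q I')
    (wJ : (∀ i : {i // i ∈ J}, Xi i.1) → Y → ℝ)
    -- q(x, y) = w_J(x_J, y) p(x, y) = w_I(x_I, y) p(x, y)
    (hwI : ∀ x y, q x y = (margI q I x y / margI p I x y) * p x y)
    -- w_J and w_I are equal as functions of (x, y)
    (hWeq : ∀ x y, wJ (fun i => x i.1) y = margI q I x y / margI p I x y) :
    -- w_I depends on x only through the coordinates in I ∩ J, and J = I
    (∀ x x' y, (∀ i ∈ I ∩ J, x i = x' i) →
      margI q I x y / margI p I x y = margI q I x' y / margI p I x' y) ∧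
    J = I := by
  set w : (∀ i, Xi i) → Y → ℝ := fun x y => margI q I x y / margI p I x y
  have hdepI : ∀ y, DependsOn (w · y) I := fun y x x' hxx' =>
    congrArg₂ (· / ·) (dependsOn_margI q I y hxx') (dependsOn_margI p I y hxx')
  have hdepJ : ∀ y, DependsOn (w · y) J := fun y x x' hxx' => by
    simp only [w, ← hWeq]
    exact congrArg (wJ · y) (funext fun i => hxx' i i.2)
  have hdep : ∀ y, DependsOn (w · y) ↑(I ∩ J) := fun y => by
    simpa only [Finset.coe_inter] using (hdepI y).inter (hdepJ y)
  have hsjs : SJScond p q (I ∩ J) := sjsCond_of_eq_mul hwI hdep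
    fun x y => (div_pos (margI_pos hq I x y) (margI_pos hp I x y)).ne'
  have hcard : s ≤ (I ∩ J).card := not_lt.1 fun h => hexact _ h hsjs
  refine ⟨fun x x' y => @hdep y x x', ?_⟩
  exact (Finset.eq_of_subset_of_card_le Finset.inter_subset_right (hJcard ▸ hcard)).symm.trans
    (Finset.eq_of_subset_of_card_le Finset.inter_subset_left (hIcard ▸ hcard))

theorem stmt_15 {d : ℕ} {Xi : Fin d → Type*} [∀ i, Fintype (Xi i)]
    {Y : Type*} [Fintype Y]
    (p q : (∀ i, Xi i) → Y → ℝ)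
    (hp : ∀ x y, 0 < p x y) (hq : ∀ x y, 0 < q x y)
    (hpsum : ∑ x, ∑ y, p x y = 1) (hqsum : ∑ x, ∑ y, q x y = 1)
    (s : ℕ) (I J : Finset (Fin d)) (hIcard : I.card = s) (hJcard : J.card = s)
    -- exact s-SJS with index set I
    (hsjs : SJScond p q I)
    (hexact : ∀ I' : Finset (Fin d), I'.card < s → ¬ SJScond p q I')
    (wJ : (∀ i : {i // i ∈ J}, Xi i.1) → Y → ℝ)
    -- q(x, y) = w_J(x_J, y) p(x, y) = w_I(x_I, y) p(x, y)
    (hwJ : ∀ x y, q x y = wJ (fun i => x i.1) y * p x y)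
    (hwI : ∀ x y, q x y = (margI q I x y / margI p I x y) * p x y)
    -- w_J and w_I are equal as functions of (x, y)
    (hWeq : ∀ x y, wJ (fun i => x i.1) y = margI q I x y / margI p I x y) :
    -- w_I depends on x only through the coordinates in I ∩ J, and J = I
    (∀ x x' y, (∀ i ∈ I ∩ J, x i = x' i) →
      margI q I x y / margI p I x y = margI q I x' y / margI p I x' y) ∧
    J = I :=
  stmt_15_general p q hp hq s I J hIcard hJcard hexact wJ hwI hWeq
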